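/- Let u ∈ ℤ_p be rational with φ_{p,q}(u) not rational. Then lim_{n→∞} (p^{n+1}·|u_{n+1}|_∞·q^{−r_n(u)})^{1/n} = 1; in particular the real power series Σ_{n=0}^∞ (p^{n+1}·u_{n+1}·q^{−r_n(u)})·T^n has radius of convergence 1 for the archimedean metric. -/

import Mathlib

open scoped Classical

/-- `ε₀(u)`: the unique integer in `{0, …, p−1}` congruent to `u` modulo `p`. -/
noncomputable def eps0 {p : ℕ} [Fact p.Prime] (u : ℤ_[p]) : ℕ := (PadicInt.toZMod u).val

open scoped Classical in
/-- `r_n(u)`: the number of indices `0 ≤ i ≤ n` with `p ∤ g^i(u)`. -/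
noncomputable def rcount (p : ℕ) [Fact p.Prime] (g : ℤ_[p] → ℤ_[p]) (u : ℤ_[p]) (n : ℕ) : ℕ :=
  ((Finset.range (n + 1)).filter fun i => ¬ (p : ℤ_[p]) ∣ g^[i] u).card

/-- `φ_{p,q}(u) = Σ ε₀(-q·g^n(u)) p^n`, for a given iteration map `g`. -/
noncomputable def phi (p q : ℕ) [Fact p.Prime] (g : ℤ_[p] → ℤ_[p]) (u : ℤ_[p]) : ℤ_[p] :=
  ∑' n : ℕ, (eps0 (-((q : ℤ_[p]) * g^[n] u)) : ℤ_[p]) * (p : ℤ_[p]) ^ n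

/-!
If the orbit `u_n` of `u` were eventually periodic, the digits `ε₀(-q u_n)` would be too and
`φ(u)` would be rational; so the `u_n` are pairwise distinct. They are rationals in `ℤ_p` whose
denominators all divide that of `u`, hence `|u_n|_∞ → ∞`. The recurrence
`p u_{n+1} = u_n` or `q u_n + ε` with `0 ≤ ε < p` shows that consecutive terms of
`c_n = p^{n+1} u_{n+1} q^{-r_n(u)}` have ratio `1` or `1 + ε/(q u_{n+1})`, which tends to `1`.
The ratio test gives the radius of convergence, and a Cesàro argument on `log |c_n|` the `n`-th
root limit.
-/

open Filter Topology

namespace PadicInt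

variable {p : ℕ} [Fact p.Prime]

lemma summable_mul_p_pow (a : ℕ → ℤ_[p]) : Summable fun n => a n * (p : ℤ_[p]) ^ n := by
  have hp : (1 : ℝ) < p := by exact_mod_cast (Fact.out : p.Prime).one_lt
  refine .of_norm_bounded
    (summable_geometric_of_lt_one (by positivity) (inv_lt_one_of_one_lt₀ hp)) fun n => ?_
  rw [norm_mul, norm_p_pow, zpow_neg, zpow_natCast, inv_pow]
  exact mul_le_of_le_one_left (by positivity) (norm_le_one _)

lemma tsum_mul_p_pow_mem_range_rat_of_periodic (d : ℕ → ℕ) {m T : ℕ} (hT : 0 < T)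
    (hd : ∀ n, d (n + (T + m)) = d (n + m)) :
    ((∑' n, (d n : ℤ_[p]) * (p : ℤ_[p]) ^ n : ℤ_[p]) : ℚ_[p]) ∈
      Set.range ((↑) : ℚ → ℚ_[p]) := by
  set F : ℕ → ℤ_[p] := fun n => (d n : ℤ_[p]) * (p : ℤ_[p]) ^ n
  have hF : Summable F := summable_mul_p_pow _
  set S : ℕ → ℤ := fun k => ∑ i ∈ Finset.range k, (d i * p ^ i : ℕ)
  have htail (k : ℕ) : ∑' i, F (i + k) = ∑' i, F i - (S k : ℤ_[p]) := by
    rw [← hF.sum_add_tsum_nat_add k]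
    push_cast [S, F]
    ring
  have hshift : ∑' i, F (i + (T + m)) = (p : ℤ_[p]) ^ T * ∑' i, F (i + m) := by
    rw [← ((summable_nat_add_iff m).2 hF).tsum_mul_left]
    congr 1 with i
    simp only [F, hd, pow_add]
    ring
  have hΦ : (1 - (p : ℚ_[p]) ^ T) * ((∑' i, F i : ℤ_[p]) : ℚ_[p]) =
      ((S (T + m) - p ^ T * S m : ℤ) : ℚ_[p]) := by
    rw [htail, htail] at hshift
    have := congrArg ((↑) : ℤ_[p] → ℚ_[p]) hshift
    push_cast at this ⊢
    linear_combination this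
  have hne : (1 - (p : ℚ) ^ T) ≠ 0 :=
    sub_ne_zero.2 (one_lt_pow₀ (by exact_mod_cast (Fact.out : p.Prime).one_lt) hT.ne').ne
  refine ⟨(S (T + m) - p ^ T * S m : ℤ) / (1 - (p : ℚ) ^ T), ?_⟩
  rw [Rat.cast_div, Rat.cast_intCast, ← hΦ, div_eq_iff (by exact_mod_cast hne)]
  push_cast
  ring

end PadicInt

namespace Rat

lemma not_dvd_den_of_norm_padic_le_one {p : ℕ} [Fact p.Prime] {x : ℚ}
    (h : ‖(x : ℚ_[p])‖ ≤ 1) : ¬ p ∣ x.den :=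
  padicValuation_le_one_iff.1 ((Padic.norm_rat_le_one_iff_padicValuation_le_one p).1 h)

lemma den_dvd_den_natCast_mul {p : ℕ} (hp : p.Prime) {x : ℚ} (hx : ¬ p ∣ x.den) :
    x.den ∣ ((p : ℚ) * x).den := by
  have h : x.den ∣ ((p : ℚ) * x).den * p := by
    have := mul_den_dvd ((p : ℚ) * x) (p : ℚ)⁻¹
    rwa [mul_comm (p : ℚ) x, mul_inv_cancel_right₀ (by exact_mod_cast hp.ne_zero),
      inv_natCast_den_of_pos hp.pos, mul_comm x] at this
  exact ((Nat.Prime.coprime_iff_not_dvd hp).2 hx).symm.dvd_of_dvd_mul_right h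

lemma den_natCast_mul_add_natCast_dvd (x : ℚ) (a b : ℕ) : ((a : ℚ) * x + b).den ∣ x.den :=
  (add_den_dvd _ _).trans (by simpa using mul_den_dvd a x)

lemma tendsto_abs_atTop_of_injective_of_den_dvd {v : ℕ → ℚ} (hv : Function.Injective v)
    {b : ℕ} (hb : b ≠ 0) (hden : ∀ n, (v n).den ∣ b) :
    Tendsto (fun n => |(v n : ℝ)|) atTop atTop := by
  have hint (n : ℕ) : ∃ k : ℤ, (b : ℚ) * v n = k := by
    obtain ⟨c, hc⟩ := hden n
    exact ⟨(v n).num * c, by rw [hc]; push_cast; rw [← mul_den_eq_num]; ring⟩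
  choose a ha using hint
  have ha_inj : Function.Injective a := fun m n h =>
    hv (mul_left_cancel₀ (by exact_mod_cast hb) ((ha m).trans (h ▸ (ha n).symm)))
  have hnorm : Tendsto (fun n => |(a n : ℝ)|) atTop atTop :=
    tendsto_norm_cocompact_atTop.comp
      (Int.tendsto_coe_cofinite.comp (Nat.cofinite_eq_atTop ▸ ha_inj.tendsto_cofinite))
  refine (hnorm.atTop_div_const (by positivity : (0 : ℝ) < b)).congr fun n => ?_
  have hba : ((a n : ℤ) : ℝ) = b * (v n : ℝ) := by
    rw [← Rat.cast_intCast, ← ha n]; push_cast; rfl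
  rw [hba, abs_mul, Nat.abs_cast, mul_div_cancel_left₀ _ (by exact_mod_cast hb)]

end Rat

lemma tendsto_rpow_inv_of_tendsto_div {B : ℕ → ℝ} (hB : ∀ n, 0 < B n)
    (h : Tendsto (fun n => B (n + 1) / B n) atTop (𝓝 1)) :
    Tendsto (fun n : ℕ => B n ^ (n : ℝ)⁻¹) atTop (𝓝 1) := by
  have hlog : Tendsto (fun n => Real.log (B (n + 1)) - Real.log (B n)) atTop (𝓝 0) := by
    have := (Real.continuousAt_log one_ne_zero).tendsto.comp h
    rw [Real.log_one] at this
    exact this.congr fun n => Real.log_div (hB _).ne' (hB _).ne'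
  -- `log B n = log B 0 + ∑ i < n, (log B (i + 1) - log B i)`, a Cesàro sum of a null sequence
  have hmean : Tendsto (fun n : ℕ => Real.log (B n) * (n : ℝ)⁻¹) atTop (𝓝 0) := by
    have h0 := (tendsto_inv_atTop_nhds_zero_nat (𝕜 := ℝ)).const_mul (Real.log (B 0))
    rw [mul_zero] at h0
    have := h0.add hlog.cesaro
    rw [add_zero] at this
    refine this.congr fun n => ?_
    rw [Finset.sum_range_sub (fun i => Real.log (B i))]
    ring
  have := (Real.continuous_exp.tendsto 0).comp hmean
  rw [Real.exp_zero] at this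
  exact this.congr fun n => (Real.rpow_def_of_pos (hB n) _).symm

noncomputable def scaledCoeff (p q : ℝ) (x : ℕ → ℝ) (r : ℕ → ℕ) (n : ℕ) : ℝ :=
  p ^ (n + 1) * x (n + 1) * (q ^ r n)⁻¹

section ScaledCoeff

variable {p q E : ℝ} {x e : ℕ → ℝ} {r : ℕ → ℕ}

lemma abs_scaledCoeff_succ_div_sub_one_le (hp : 0 < p) (hq : 0 < q) (hx : ∀ n, x n ≠ 0)
    (he : ∀ n, |e n| ≤ E)
    (hstep : ∀ n, r (n + 1) = r n ∧ p * x (n + 2) = x (n + 1) ∨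
      r (n + 1) = r n + 1 ∧ p * x (n + 2) = q * x (n + 1) + e n) (n : ℕ) :
    |scaledCoeff p q x r (n + 1) / scaledCoeff p q x r n - 1| ≤ E / (q * |x (n + 1)|) := by
  have hx1 := hx (n + 1)
  unfold scaledCoeff
  rcases hstep n with ⟨hr, hpx⟩ | ⟨hr, hpx⟩
  · have : p ^ (n + 2) * x (n + 2) * (q ^ r (n + 1))⁻¹ =
        p ^ (n + 1) * x (n + 1) * (q ^ r n)⁻¹ := by
      rw [hr, ← hpx]; ring
    rw [this, div_self (by positivity), sub_self, abs_zero]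
    exact div_nonneg ((abs_nonneg _).trans (he n)) (by positivity)
  · have : p ^ (n + 2) * x (n + 2) * (q ^ r (n + 1))⁻¹ /
        (p ^ (n + 1) * x (n + 1) * (q ^ r n)⁻¹) - 1 = e n / (q * x (n + 1)) := by
      rw [hr, pow_succ p (n + 1), pow_succ q]
      field_simp
      linear_combination hpx
    rw [this, abs_div, abs_mul, abs_of_pos hq]
    gcongr
    exact he n

lemma tendsto_scaledCoeff_succ_div (hp : 0 < p) (hq : 0 < q) (hx : ∀ n, x n ≠ 0)
    (hx_top : Tendsto (fun n => |x n|) atTop atTop) (he : ∀ n, |e n| ≤ E)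
    (hstep : ∀ n, r (n + 1) = r n ∧ p * x (n + 2) = x (n + 1) ∨
      r (n + 1) = r n + 1 ∧ p * x (n + 2) = q * x (n + 1) + e n) :
    Tendsto (fun n => scaledCoeff p q x r (n + 1) / scaledCoeff p q x r n) atTop (𝓝 1) := by
  rw [tendsto_iff_norm_sub_tendsto_zero]
  refine squeeze_zero (fun n => norm_nonneg _)
    (abs_scaledCoeff_succ_div_sub_one_le hp hq hx he hstep) ?_
  exact tendsto_const_nhds.div_atTop
    ((hx_top.comp (tendsto_add_atTop_nat 1)).const_mul_atTop hq)

end ScaledCoeff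

lemma eps0_lt {p : ℕ} [Fact p.Prime] (u : ℤ_[p]) : eps0 u < p :=
  haveI : NeZero p := ⟨(Fact.out : p.Prime).ne_zero⟩
  ZMod.val_lt _

section Iteration

variable {p q : ℕ} [Fact p.Prime] {g : ℤ_[p] → ℤ_[p]} {u : ℤ_[p]}

lemma injective_iterate_of_phi_not_mem_range
    (h : ((phi p q g u : ℤ_[p]) : ℚ_[p]) ∉ Set.range ((↑) : ℚ → ℚ_[p])) :
    Function.Injective fun n => g^[n] u := by
  refine Function.Injective.of_lt_imp_ne fun m k hmk heq => h ?_
  obtain ⟨T, rfl⟩ := Nat.exists_eq_add_of_lt hmk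
  refine PadicInt.tsum_mul_p_pow_mem_range_rat_of_periodic _ T.succ_pos (m := m) fun n => ?_
  rw [show m + T + 1 = T.succ + m by omega] at heq
  rw [Function.iterate_add_apply, ← heq, ← Function.iterate_add_apply]

lemma rcount_succ (g : ℤ_[p] → ℤ_[p]) (u : ℤ_[p]) (n : ℕ) :
    rcount p g u (n + 1) =
      if (p : ℤ_[p]) ∣ g^[n + 1] u then rcount p g u n else rcount p g u n + 1 := by
  unfold rcount
  rw [Finset.range_add_one, Finset.filter_insert]
  split_ifs
  · rfl
  · exact Finset.card_insert_of_notMem (by simp)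

end Iteration

def IsCollatzMap (p q : ℕ) [Fact p.Prime] (g : ℤ_[p] → ℤ_[p]) : Prop :=
  ∀ u : ℤ_[p], (p : ℤ_[p]) * g u =
    if (p : ℤ_[p]) ∣ u then u else (q : ℤ_[p]) * u + (eps0 (-((q : ℤ_[p]) * u)) : ℤ_[p])

namespace IsCollatzMap

variable {p q : ℕ} [Fact p.Prime] {g : ℤ_[p] → ℤ_[p]}

lemma map_zero (hg : IsCollatzMap p q g) : g 0 = 0 := by
  have h := hg 0
  rw [if_pos (dvd_zero _), mul_eq_zero] at h
  exact h.resolve_left (by exact_mod_cast (Fact.out : p.Prime).ne_zero)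

lemma iterate_ne_zero (hg : IsCollatzMap p q g) {u : ℤ_[p]}
    (hinj : Function.Injective fun n => g^[n] u) (n : ℕ) : g^[n] u ≠ 0 := fun h0 =>
  n.succ_ne_self <| hinj <| by
    simp only [Function.iterate_succ_apply', h0, hg.map_zero]

variable {u : ℤ_[p]} {v : ℕ → ℚ}

lemma rat_iterate_succ (hg : IsCollatzMap p q g)
    (hv : ∀ n, ((v n : ℚ) : ℚ_[p]) = ((g^[n] u : ℤ_[p]) : ℚ_[p])) (n : ℕ) :
    (p : ℚ) * v (n + 1) = if (p : ℤ_[p]) ∣ g^[n] u then v n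
      else q * v n + eps0 (-((q : ℤ_[p]) * g^[n] u)) := by
  apply Rat.cast_injective (α := ℚ_[p])
  have h := congrArg ((↑) : ℤ_[p] → ℚ_[p]) (hg (g^[n] u))
  rw [← Function.iterate_succ_apply' g n u] at h
  split_ifs at h ⊢ <;> push_cast [hv] at h ⊢ <;> exact h

lemma den_rat_iterate_dvd (hg : IsCollatzMap p q g)
    (hv : ∀ n, ((v n : ℚ) : ℚ_[p]) = ((g^[n] u : ℤ_[p]) : ℚ_[p])) (n : ℕ) :
    (v n).den ∣ (v 0).den := by
  induction n with
  | zero => rfl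
  | succ n ih =>
    have hp : p.Prime := Fact.out
    refine (Rat.den_dvd_den_natCast_mul hp (Rat.not_dvd_den_of_norm_padic_le_one ?_)).trans ?_
    · rw [hv, PadicInt.padic_norm_e_of_padicInt]
      exact PadicInt.norm_le_one _
    · rw [hg.rat_iterate_succ hv n]
      split_ifs
      · exact ih
      · exact (Rat.den_natCast_mul_add_natCast_dvd _ _ _).trans ih

lemma rat_iterate_ne_zero (hg : IsCollatzMap p q g)
    (hv : ∀ n, ((v n : ℚ) : ℚ_[p]) = ((g^[n] u : ℤ_[p]) : ℚ_[p]))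
    (hinj : Function.Injective fun n => g^[n] u) (n : ℕ) : (v n : ℝ) ≠ 0 := by
  have h := hg.iterate_ne_zero hinj n
  contrapose! h
  exact Subtype.ext (by simpa [← hv] using h)

lemma tendsto_abs_rat_iterate_atTop (hg : IsCollatzMap p q g)
    (hv : ∀ n, ((v n : ℚ) : ℚ_[p]) = ((g^[n] u : ℤ_[p]) : ℚ_[p]))
    (hinj : Function.Injective fun n => g^[n] u) :
    Tendsto (fun n => |(v n : ℝ)|) atTop atTop := by
  refine Rat.tendsto_abs_atTop_of_injective_of_den_dvd (fun m n h => hinj ?_) (v 0).den_nz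
    (hg.den_rat_iterate_dvd hv)
  exact Subtype.ext (by simpa only [hv] using congrArg ((↑) : ℚ → ℚ_[p]) h)

lemma rcount_succ_and_rat_iterate (hg : IsCollatzMap p q g)
    (hv : ∀ n, ((v n : ℚ) : ℚ_[p]) = ((g^[n] u : ℤ_[p]) : ℚ_[p])) (n : ℕ) :
    rcount p g u (n + 1) = rcount p g u n ∧ (p : ℝ) * v (n + 2) = v (n + 1) ∨
      rcount p g u (n + 1) = rcount p g u n + 1 ∧
        (p : ℝ) * v (n + 2) = q * v (n + 1) + eps0 (-((q : ℤ_[p]) * g^[n + 1] u)) := by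
  rw [rcount_succ]
  have h := hg.rat_iterate_succ hv (n + 1)
  split_ifs at h ⊢
  · exact .inl ⟨rfl, by exact_mod_cast h⟩
  · exact .inr ⟨rfl, by exact_mod_cast h⟩

end IsCollatzMap

theorem stmt16_general (p q : ℕ) [Fact p.Prime] (hq : 0 < q)
    (g : ℤ_[p] → ℤ_[p])
    (hg : ∀ u : ℤ_[p], (p : ℤ_[p]) * g u =
      if (p : ℤ_[p]) ∣ u then u
      else (q : ℤ_[p]) * u + (eps0 (-((q : ℤ_[p]) * u)) : ℤ_[p]))
    (u : ℤ_[p]) (v : ℕ → ℚ)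
    (hv : ∀ n : ℕ, ((v n : ℚ) : ℚ_[p]) = ((g^[n] u : ℤ_[p]) : ℚ_[p]))
    (hirr : ((phi p q g u : ℤ_[p]) : ℚ_[p]) ∉ Set.range ((↑) : ℚ → ℚ_[p])) :
    Filter.Tendsto
      (fun n : ℕ =>
        ((p : ℝ) ^ (n + 1) * |((v (n + 1) : ℚ) : ℝ)| * ((q : ℝ) ^ rcount p g u n)⁻¹) ^
          ((n : ℝ)⁻¹))
      Filter.atTop (nhds 1) ∧
    (FormalMultilinearSeries.ofScalars ℝ
        (fun n : ℕ =>
          (p : ℝ) ^ (n + 1) * ((v (n + 1) : ℚ) : ℝ) * ((q : ℝ) ^ rcount p g u n)⁻¹)).radius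
      = 1 := by
  have hp : p.Prime := Fact.out
  have hg : IsCollatzMap p q g := hg
  have hU := injective_iterate_of_phi_not_mem_range hirr
  have hratio := tendsto_scaledCoeff_succ_div (E := p)
    (e := fun n => eps0 (-((q : ℤ_[p]) * g^[n + 1] u)))
    (by exact_mod_cast hp.pos) (by exact_mod_cast hq) (hg.rat_iterate_ne_zero hv hU)
    (hg.tendsto_abs_rat_iterate_atTop hv hU) (fun n => by simpa using (eps0_lt _).le)
    (hg.rcount_succ_and_rat_iterate hv)
  have hc0 (n : ℕ) : scaledCoeff p q (fun n => (v n : ℝ)) (rcount p g u) n ≠ 0 := by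
    simp [scaledCoeff, hg.rat_iterate_ne_zero hv hU, hp.ne_zero, hq.ne']
  refine ⟨?_, ?_⟩
  · have := tendsto_rpow_inv_of_tendsto_div (fun n => abs_pos.2 (hc0 n))
      (by simpa only [abs_div, abs_one] using hratio.abs)
    simpa [scaledCoeff, abs_mul] using this
  · have := FormalMultilinearSeries.ofScalars_radius_eq_inv_of_tendsto ℝ
      (scaledCoeff p q (fun n => (v n : ℝ)) (rcount p g u)) one_ne_zero
      (by simpa only [norm_div, norm_one, NNReal.coe_one] using hratio.norm)
    rwa [inv_one, ENNReal.coe_one] at this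

/-- Let `u ∈ ℤ_p` be rational (with `v n ∈ ℚ` equal to the iterate `g^n(u)`) and suppose
`φ_{p,q}(u)` is not rational. Then `(p^{n+1}|u_{n+1}|_∞ q^{-r_n(u)})^{1/n} → 1`; in particular
the real power series `Σ p^{n+1} u_{n+1} q^{-r_n(u)} T^n` has radius of convergence `1`. -/
theorem stmt16 (p q : ℕ) [Fact p.Prime] (hq : 0 < q) (hpq : Nat.Coprime p q)
    (g : ℤ_[p] → ℤ_[p])
    (hg : ∀ u : ℤ_[p], (p : ℤ_[p]) * g u =
      if (p : ℤ_[p]) ∣ u then u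
      else (q : ℤ_[p]) * u + (eps0 (-((q : ℤ_[p]) * u)) : ℤ_[p]))
    (u : ℤ_[p]) (v : ℕ → ℚ)
    (hv : ∀ n : ℕ, ((v n : ℚ) : ℚ_[p]) = ((g^[n] u : ℤ_[p]) : ℚ_[p]))
    (hirr : ((phi p q g u : ℤ_[p]) : ℚ_[p]) ∉ Set.range ((↑) : ℚ → ℚ_[p])) :
    Filter.Tendsto
      (fun n : ℕ =>
        ((p : ℝ) ^ (n + 1) * |((v (n + 1) : ℚ) : ℝ)| * ((q : ℝ) ^ rcount p g u n)⁻¹) ^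
          ((n : ℝ)⁻¹))
      Filter.atTop (nhds 1) ∧
    (FormalMultilinearSeries.ofScalars ℝ
        (fun n : ℕ =>
          (p : ℝ) ^ (n + 1) * ((v (n + 1) : ℚ) : ℝ) * ((q : ℝ) ^ rcount p g u n)⁻¹)).radius
      = 1 :=
  stmt16_general p q hq g hg u v hv hirr
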